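/- arXiv:1610.00487 — 2 statements merged into one kernel-verified Lean document; each statement's English description precedes it below -/
import Mathlib

section
/- Let V be a nonempty finite set and let s ≥ 2 be an integer. For every even integer ℓ ≥ 2, the quantity ‖·‖_{□_ℓ(V^s)} is a norm on the real vector space of functions V^s → ℝ (it is nonnegative, vanishes exactly at the zero function, is absolutely homogeneous, and satisfies the triangle inequality). Moreover, if ℓ_1 ≤ ℓ_2 are even integers with ℓ_1 ≥ 2, then ‖F‖_{□_{ℓ_1}(V^s)} ≤ ‖F‖_{□_{ℓ_2}(V^s)} for every F : V^s → ℝ. -/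
open Finset

/-- The average of a real-valued function on a finite type. -/
noncomputable def avg (α : Type*) [Fintype α] (f : α → ℝ) : ℝ :=
  (∑ x, f x) / (Fintype.card α : ℝ)

/-- The `ℓ`-box norm `‖F‖_{□_ℓ(V^s)}` of `F : V^s → ℝ`.  Here `V^{s×ℓ}` is modelled as
`Fin s → Fin ℓ → V`, an element `ω ∈ [ℓ]^s` as `ω : Fin s → Fin ℓ`, and the projection
`π_ω : V^{s×ℓ} → V^s` sends `x` to `fun i => x i (ω i)`.  The box norm `‖F‖_{□(V^s)}`
is the case `ℓ = 2`. -/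
noncomputable def boxNorm (V : Type*) [Fintype V] (s ℓ : ℕ) (F : (Fin s → V) → ℝ) : ℝ :=
  (avg (Fin s → Fin ℓ → V) fun x =>
      ∏ ω : Fin s → Fin ℓ, F fun i => x i (ω i)) ^ (((ℓ : ℝ) ^ s)⁻¹)

/-- The cut norm `‖F‖_{cut(V^s)}` of `F : V^s → ℝ`; the distinguished element `1^s` of
`[2]^s` is modelled as `fun _ => (0 : Fin 2)`. -/
noncomputable def cutNorm (V : Type*) [Fintype V] (s : ℕ) (F : (Fin s → V) → ℝ) : ℝ :=
  sSup {r : ℝ | ∃ H : (Fin s → Fin 2) → (Fin s → V) → ℝ,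
    (∀ ω y, H ω y ∈ Set.Icc (-1 : ℝ) 1) ∧
    r = avg (Fin s → Fin 2 → V) fun x =>
      F (fun i => x i 0) *
        ∏ ω ∈ Finset.univ.filter (fun ω : Fin s → Fin 2 => ω ≠ fun _ => 0),
          H ω fun i => x i (ω i)}

open scoped BigOperators

/-!
Everything rests on the Gowers–Cauchy–Schwarz inequality `|⟨f_ω⟩_{□_ℓ}| ≤ ∏_ω ‖f_ω‖_{□_ℓ}` for
the `ℓ`-box inner product `⟨f_ω⟩_{□_ℓ} = 𝔼_x ∏_ω f_ω(π_ω x)` of a family `(f_ω)_{ω ∈ [ℓ]^s}`.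
Averaging first over the variables `x_{1j}` of the first coordinate writes `⟨f_ω⟩` as the average
of a product of `ℓ` functions, which Hölder's inequality (with `ℓ` even) bounds by the inner
products of the families that do not depend on `ω_1`. The inner product of such a family is an
average of `(s-1)`-dimensional inner products, so the inequality in dimension `s - 1` and Hölder
once more bound it by the norms, which closes the induction on `s`.

The triangle inequality follows by expanding `∏_ω (F + G)(π_ω x)` and bounding each of the
`2^{ℓ^s}` terms by Gowers–Cauchy–Schwarz. Definiteness comes from pairing `F` with indicators of
a point `y₀`, and monotonicity in `ℓ` from pairing `F` on a copy of `[ℓ₁]^s` inside `[ℓ₂]^s` with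
the constant `1` elsewhere.
-/

namespace Real

variable {ι α : Type*} [Fintype α]

theorem expect_prod_rpow_le_prod_rpow_expect (s : Finset ι) (w : ι → ℝ) (G : ι → α → ℝ)
    (hw : ∀ i ∈ s, 0 ≤ w i) (hw' : ∑ i ∈ s, w i = 1) (hG : ∀ i ∈ s, ∀ a, 0 ≤ G i a) :
    𝔼 a, ∏ i ∈ s, G i a ^ w i ≤ ∏ i ∈ s, (𝔼 a, G i a) ^ w i := by
  set T := fun i => 𝔼 a, G i a
  have hT : ∀ i ∈ s, 0 ≤ T i := fun i hi => expect_nonneg fun a _ => hG i hi a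
  by_cases! hdeg : ∃ i ∈ s, T i = 0 ∧ w i ≠ 0
  · obtain ⟨i, hi, hTi, hwi⟩ := hdeg
    have hGi : G i = 0 := (Fintype.expect_eq_zero_iff_of_nonneg (hG i hi)).1 hTi
    calc 𝔼 a, ∏ i ∈ s, G i a ^ w i = 0 :=
          expect_eq_zero fun a _ => prod_eq_zero hi (by simp [hGi, zero_rpow hwi])
      _ ≤ _ := prod_nonneg fun j hj => rpow_nonneg (hT j hj) _
  -- Normalize each `G i` by its mean and apply weighted AM-GM pointwise.
  have hsplit : ∀ a, ∏ i ∈ s, G i a ^ w i =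
      (∏ i ∈ s, (G i a / T i) ^ w i) * ∏ i ∈ s, T i ^ w i := by
    intro a
    rw [← prod_mul_distrib]
    refine prod_congr rfl fun i hi => ?_
    rcases eq_or_ne (T i) 0 with h | h
    · simp [hdeg i hi h]
    · rw [← mul_rpow (div_nonneg (hG i hi a) (hT i hi)) (hT i hi), div_mul_cancel₀ _ h]
  have hnorm : ∑ i ∈ s, w i * (T i / T i) = 1 := by
    rw [← hw']
    refine sum_congr rfl fun i hi => ?_
    rcases eq_or_ne (T i) 0 with h | h
    · simp [hdeg i hi h]
    · rw [div_self h, mul_one]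
  calc 𝔼 a, ∏ i ∈ s, G i a ^ w i
      = 𝔼 a, (∏ i ∈ s, (G i a / T i) ^ w i) * ∏ i ∈ s, T i ^ w i := by simp_rw [hsplit]
    _ ≤ 𝔼 a, (∑ i ∈ s, w i * (G i a / T i)) * ∏ i ∈ s, T i ^ w i :=
        expect_le_expect fun a _ => mul_le_mul_of_nonneg_right
          (geom_mean_le_arith_mean_weighted s w _ hw hw' fun i hi =>
            div_nonneg (hG i hi a) (hT i hi))
          (prod_nonneg fun i hi => rpow_nonneg (hT i hi) _)
    _ = (∑ i ∈ s, w i * (T i / T i)) * ∏ i ∈ s, T i ^ w i := by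
        rw [← expect_mul, expect_sum_comm]
        simp_rw [← mul_expect, ← expect_div]
        rfl
    _ = ∏ i ∈ s, T i ^ w i := by rw [hnorm, one_mul]

end Real

theorem Fintype.prod_expect {ι κ : Type*} [Fintype ι] [DecidableEq ι] [Fintype κ]
    {K : Type*} [Semifield K] [CharZero K] (h : ι → κ → K) :
    ∏ i, 𝔼 u, h i u = 𝔼 x : ι → κ, ∏ i, h i (x i) := by
  simp_rw [Fintype.expect_eq_sum_div_card, prod_div_distrib, Fintype.prod_sum, prod_const,
    card_univ, Fintype.card_fun, Nat.cast_pow]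

theorem Fintype.prod_add_eq_sum_prod_ite {ι R : Type*} [Fintype ι] [DecidableEq ι]
    [CommSemiring R] (f g : ι → R) :
    ∏ i, (f i + g i) = ∑ t : Finset ι, ∏ i, if i ∈ t then f i else g i := by
  rw [Fintype.prod_add]
  refine Finset.sum_congr rfl fun t _ => ?_
  rw [prod_ite, filter_mem_eq_inter, univ_inter, compl_eq_univ_sdiff, sdiff_eq_filter]

theorem Function.exists_ne_apply_eq {ι κ : Type*} [Nontrivial ι] [Nontrivial κ] [DecidableEq ι]
    (ω₀ : ι → κ) (i : ι) (j : κ) : ∃ ω ≠ ω₀, ω i = j := by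
  by_cases hj : j = ω₀ i
  · obtain ⟨i', hi'⟩ := exists_ne i
    obtain ⟨k, hk⟩ := exists_ne (ω₀ i')
    refine ⟨Function.update ω₀ i' k, fun h => hk ?_, ?_⟩
    · simpa using congrFun h i'
    · rw [Function.update_of_ne hi'.symm, hj]
  · exact ⟨Function.update ω₀ i j, fun h => hj (by simpa using congrFun h i), by simp⟩

theorem Fin.expect_comp_castAdd {V M : Type*} [Fintype V] [Nonempty V] [AddCommMonoid M]
    [Module ℚ≥0 M] (s ℓ d : ℕ) (g : (Fin s → Fin ℓ → V) → M) :
    𝔼 x : Fin s → Fin (ℓ + d) → V, g (fun i j => x i (Fin.castAdd d j)) = 𝔼 y, g y := by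
  let e : (Fin s → Fin (ℓ + d) → V) ≃ (Fin s → Fin ℓ → V) × (Fin s → Fin d → V) :=
    (Equiv.piCongrRight fun _ => (Fin.appendEquiv ℓ d).symm).trans
      (Equiv.arrowProdEquivProdArrow _ _ _)
  rw [Fintype.expect_equiv e (fun x => g fun i j => x i (Fin.castAdd d j)) (fun p => g p.1)
    fun x => rfl, ← univ_product_univ, expect_product]
  simp only [Fintype.expect_const]

section BoxNorm

variable {V : Type*} [Fintype V] {s ℓ : ℕ}

noncomputable def boxInner (V : Type*) [Fintype V] (s ℓ : ℕ)
    (f : (Fin s → Fin ℓ) → (Fin s → V) → ℝ) : ℝ :=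
  𝔼 x : Fin s → Fin ℓ → V, ∏ ω, f ω fun i => x i (ω i)

theorem boxNorm_eq_boxInner (F : (Fin s → V) → ℝ) :
    boxNorm V s ℓ F = boxInner V s ℓ (fun _ => F) ^ ((ℓ : ℝ) ^ s)⁻¹ := by
  rw [boxNorm, boxInner, avg, Fintype.expect_eq_sum_div_card]

theorem boxInner_succ (f : (Fin (s + 1) → Fin ℓ) → (Fin (s + 1) → V) → ℝ) :
    boxInner V (s + 1) ℓ f = 𝔼 x₀ : Fin ℓ → V, 𝔼 x : Fin s → Fin ℓ → V,
      ∏ j, ∏ ω, f (Fin.cons j ω) (Fin.cons (x₀ j) fun i => x i (ω i)) := by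
  rw [boxInner, ← Fintype.expect_equiv (Fin.consEquiv fun _ => Fin ℓ → V) (fun p => _) _
    fun _ => rfl, ← univ_product_univ, expect_product]
  refine expect_congr rfl fun x₀ _ => expect_congr rfl fun x _ => ?_
  rw [← (Fin.consEquiv fun _ => Fin ℓ).prod_comp, Fintype.prod_prod_type]
  refine prod_congr rfl fun j _ => prod_congr rfl fun ω _ => congrArg _ ?_
  ext i
  cases i using Fin.cases <;> rfl

theorem boxInner_succ_eq_expect_prod (f : (Fin (s + 1) → Fin ℓ) → (Fin (s + 1) → V) → ℝ) :
    boxInner V (s + 1) ℓ f = 𝔼 x : Fin s → Fin ℓ → V,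
      ∏ j, 𝔼 u : V, ∏ ω, f (Fin.cons j ω) (Fin.cons u fun i => x i (ω i)) := by
  simp_rw [boxInner_succ, Fintype.prod_expect]
  exact expect_comm _ _ _

theorem boxInner_succ_comp_tail (g : (Fin s → Fin ℓ) → (Fin (s + 1) → V) → ℝ) :
    boxInner V (s + 1) ℓ (fun ω => g (Fin.tail ω)) =
      𝔼 x₀ : Fin ℓ → V, boxInner V s ℓ (fun ω y => ∏ j, g ω (Fin.cons (x₀ j) y)) := by
  rw [boxInner_succ]
  refine expect_congr rfl fun x₀ _ => ?_
  simp only [Fin.tail_cons, boxInner]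
  exact expect_congr rfl fun x _ => prod_comm

theorem boxInner_comp_tail_nonneg (hℓ : Even ℓ) (g : (Fin s → Fin ℓ) → (Fin (s + 1) → V) → ℝ) :
    0 ≤ boxInner V (s + 1) ℓ (fun ω => g (Fin.tail ω)) := by
  simp only [boxInner_succ_eq_expect_prod, Fin.tail_cons, prod_const, card_univ,
    Fintype.card_fin]
  exact expect_nonneg fun x _ => hℓ.pow_nonneg _

theorem boxInner_const_nonneg (hs : s ≠ 0) (hℓ : Even ℓ) (F : (Fin s → V) → ℝ) :
    0 ≤ boxInner V s ℓ (fun _ => F) := by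
  obtain ⟨s, rfl⟩ := Nat.exists_eq_succ_of_ne_zero hs
  exact boxInner_comp_tail_nonneg hℓ fun _ => F

theorem abs_boxInner_succ_le (hℓ₀ : ℓ ≠ 0) (hℓ : Even ℓ)
    (f : (Fin (s + 1) → Fin ℓ) → (Fin (s + 1) → V) → ℝ) :
    |boxInner V (s + 1) ℓ f| ≤
      ∏ j, boxInner V (s + 1) ℓ (fun ω => f (Fin.cons j (Fin.tail ω))) ^ (ℓ : ℝ)⁻¹ := by
  set G := fun j (x : Fin s → Fin ℓ → V) =>
    𝔼 u : V, ∏ ω, f (Fin.cons j ω) (Fin.cons u fun i => x i (ω i))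
  have hG : ∀ j, boxInner V (s + 1) ℓ (fun ω => f (Fin.cons j (Fin.tail ω))) = 𝔼 x, G j x ^ ℓ := by
    intro j
    simp only [boxInner_succ_eq_expect_prod, Fin.tail_cons, prod_const, card_univ,
      Fintype.card_fin, G]
  have habs : ∀ j x, |G j x| = (G j x ^ ℓ) ^ (ℓ : ℝ)⁻¹ := fun j x => by
    rw [← hℓ.pow_abs, Real.pow_rpow_inv_natCast (abs_nonneg _) hℓ₀]
  calc |boxInner V (s + 1) ℓ f| = |𝔼 x, ∏ j, G j x| := by rw [boxInner_succ_eq_expect_prod]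
    _ ≤ 𝔼 x, ∏ j, (G j x ^ ℓ) ^ (ℓ : ℝ)⁻¹ := by
        simpa only [abs_prod, habs] using abs_expect_le univ fun x => ∏ j, G j x
    _ ≤ ∏ j, (𝔼 x, G j x ^ ℓ) ^ (ℓ : ℝ)⁻¹ :=
        Real.expect_prod_rpow_le_prod_rpow_expect _ _ _ (fun _ _ => by positivity)
          (by simp [hℓ₀]) fun j _ x => hℓ.pow_nonneg _
    _ = _ := by simp_rw [hG]

theorem abs_boxInner_succ_le_of_comp_tail_le (hℓ₀ : ℓ ≠ 0) (hℓ : Even ℓ)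
    (htail : ∀ g : (Fin s → Fin ℓ) → (Fin (s + 1) → V) → ℝ,
      boxInner V (s + 1) ℓ (fun ω => g (Fin.tail ω)) ≤
        ∏ ω, boxInner V (s + 1) ℓ (fun _ => g ω) ^ ((ℓ : ℝ) ^ s)⁻¹)
    (f : (Fin (s + 1) → Fin ℓ) → (Fin (s + 1) → V) → ℝ) :
    |boxInner V (s + 1) ℓ f| ≤
      ∏ ω, boxInner V (s + 1) ℓ (fun _ => f ω) ^ ((ℓ : ℝ) ^ (s + 1))⁻¹ := by
  have hnonneg : ∀ ω, 0 ≤ boxInner V (s + 1) ℓ (fun _ => f ω) :=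
    fun ω => boxInner_const_nonneg s.succ_ne_zero hℓ _
  have htail_nonneg : ∀ j, 0 ≤ boxInner V (s + 1) ℓ (fun ω => f (Fin.cons j (Fin.tail ω))) :=
    fun j => boxInner_comp_tail_nonneg hℓ fun ω => f (Fin.cons j ω)
  calc |boxInner V (s + 1) ℓ f|
      ≤ ∏ j, boxInner V (s + 1) ℓ (fun ω => f (Fin.cons j (Fin.tail ω))) ^ (ℓ : ℝ)⁻¹ :=
        abs_boxInner_succ_le hℓ₀ hℓ f
    _ ≤ ∏ j, (∏ ω, boxInner V (s + 1) ℓ (fun _ => f (Fin.cons j ω)) ^ ((ℓ : ℝ) ^ s)⁻¹) ^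
          (ℓ : ℝ)⁻¹ :=
        prod_le_prod (fun j _ => Real.rpow_nonneg (htail_nonneg j) _) fun j _ =>
          Real.rpow_le_rpow (htail_nonneg j) (htail fun ω => f (Fin.cons j ω)) (by positivity)
    _ = ∏ j, ∏ ω, boxInner V (s + 1) ℓ (fun _ => f (Fin.cons j ω)) ^ ((ℓ : ℝ) ^ (s + 1))⁻¹ := by
        refine prod_congr rfl fun j _ => ?_
        rw [← Real.finsetProd_rpow _ _ fun ω _ => Real.rpow_nonneg (hnonneg _) _]
        refine prod_congr rfl fun ω _ => ?_
        rw [← Real.rpow_mul (hnonneg _), pow_succ, mul_inv]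
    _ = ∏ ω, boxInner V (s + 1) ℓ (fun _ => f ω) ^ ((ℓ : ℝ) ^ (s + 1))⁻¹ := by
        rw [← (Fin.consEquiv fun _ => Fin ℓ).prod_comp, Fintype.prod_prod_type]
        simp only [Fin.consEquiv, Equiv.coe_fn_mk]

theorem boxInner_comp_tail_le (hℓ₀ : ℓ ≠ 0) (hℓ : Even ℓ) (s : ℕ)
    (g : (Fin s → Fin ℓ) → (Fin (s + 1) → V) → ℝ) :
    boxInner V (s + 1) ℓ (fun ω => g (Fin.tail ω)) ≤
      ∏ ω, boxInner V (s + 1) ℓ (fun _ => g ω) ^ ((ℓ : ℝ) ^ s)⁻¹ := by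
  induction s with
  | zero =>
    rw [Fintype.prod_unique, pow_zero, inv_one, Real.rpow_one]
    exact le_of_eq (congrArg _ (funext fun ω => congrArg g (Subsingleton.elim _ _)))
  | succ s ih =>
    have hgcs := abs_boxInner_succ_le_of_comp_tail_le hℓ₀ hℓ ih
    rw [boxInner_succ_comp_tail]
    calc 𝔼 x₀ : Fin ℓ → V, boxInner V (s + 1) ℓ (fun ω y => ∏ j, g ω (Fin.cons (x₀ j) y))
        ≤ 𝔼 x₀ : Fin ℓ → V, ∏ ω, boxInner V (s + 1) ℓ
            (fun _ y => ∏ j, g ω (Fin.cons (x₀ j) y)) ^ ((ℓ : ℝ) ^ (s + 1))⁻¹ :=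
          expect_le_expect fun x₀ _ => (le_abs_self _).trans (hgcs _)
      _ ≤ ∏ ω, (𝔼 x₀ : Fin ℓ → V, boxInner V (s + 1) ℓ
            (fun _ y => ∏ j, g ω (Fin.cons (x₀ j) y))) ^ ((ℓ : ℝ) ^ (s + 1))⁻¹ :=
          Real.expect_prod_rpow_le_prod_rpow_expect _ _ _ (fun _ _ => by positivity)
            (by simp [hℓ₀]) fun ω _ x₀ => boxInner_const_nonneg s.succ_ne_zero hℓ _
      _ = ∏ ω, boxInner V (s + 2) ℓ (fun _ => g ω) ^ ((ℓ : ℝ) ^ (s + 1))⁻¹ := by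
          simp_rw [← boxInner_succ_comp_tail]

theorem abs_boxInner_le_prod_boxNorm (hs : s ≠ 0) (hℓ₀ : ℓ ≠ 0) (hℓ : Even ℓ)
    (f : (Fin s → Fin ℓ) → (Fin s → V) → ℝ) :
    |boxInner V s ℓ f| ≤ ∏ ω, boxNorm V s ℓ (f ω) := by
  obtain ⟨s, rfl⟩ := Nat.exists_eq_succ_of_ne_zero hs
  simpa only [boxNorm_eq_boxInner] using
    abs_boxInner_succ_le_of_comp_tail_le hℓ₀ hℓ (boxInner_comp_tail_le hℓ₀ hℓ s) f

theorem boxInner_add (f g : (Fin s → Fin ℓ) → (Fin s → V) → ℝ) :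
    boxInner V s ℓ (fun ω y => f ω y + g ω y) =
      ∑ T : Finset (Fin s → Fin ℓ), boxInner V s ℓ (fun ω => if ω ∈ T then f ω else g ω) := by
  simp only [boxInner, Fintype.prod_add_eq_sum_prod_ite, ite_apply]
  exact expect_sum_comm _ _ _

theorem boxNorm_nonneg (hs : s ≠ 0) (hℓ : Even ℓ) (F : (Fin s → V) → ℝ) :
    0 ≤ boxNorm V s ℓ F := by
  rw [boxNorm_eq_boxInner]
  exact Real.rpow_nonneg (boxInner_const_nonneg hs hℓ F) _

theorem boxNorm_le_of_boxInner_le (hs : s ≠ 0) (hℓ₀ : ℓ ≠ 0) (hℓ : Even ℓ)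
    {F : (Fin s → V) → ℝ} {a : ℝ} (ha : 0 ≤ a) (h : boxInner V s ℓ (fun _ => F) ≤ a ^ ℓ ^ s) :
    boxNorm V s ℓ F ≤ a := by
  rw [boxNorm_eq_boxInner]
  calc _ ≤ (a ^ ℓ ^ s) ^ ((ℓ : ℝ) ^ s)⁻¹ :=
        Real.rpow_le_rpow (boxInner_const_nonneg hs hℓ F) h (by positivity)
    _ = a := by rw [← Nat.cast_pow, Real.pow_rpow_inv_natCast ha (pow_ne_zero _ hℓ₀)]

theorem boxNorm_const_mul (hs : s ≠ 0) (hℓ₀ : ℓ ≠ 0) (hℓ : Even ℓ) (c : ℝ)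
    (F : (Fin s → V) → ℝ) :
    boxNorm V s ℓ (fun x => c * F x) = |c| * boxNorm V s ℓ F := by
  have hinner : boxInner V s ℓ (fun _ x => c * F x) =
      |c| ^ ℓ ^ s * boxInner V s ℓ (fun _ => F) := by
    simp only [boxInner, prod_mul_distrib, prod_const, card_univ, Fintype.card_fun,
      Fintype.card_fin, (hℓ.pow_of_ne_zero hs).pow_abs, mul_expect]
  rw [boxNorm_eq_boxInner, boxNorm_eq_boxInner, hinner,
    Real.mul_rpow (by positivity) (boxInner_const_nonneg hs hℓ F), ← Nat.cast_pow,
    Real.pow_rpow_inv_natCast (abs_nonneg c) (pow_ne_zero _ hℓ₀)]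

theorem boxNorm_add_le (hs : s ≠ 0) (hℓ₀ : ℓ ≠ 0) (hℓ : Even ℓ) (F G : (Fin s → V) → ℝ) :
    boxNorm V s ℓ (fun x => F x + G x) ≤ boxNorm V s ℓ F + boxNorm V s ℓ G := by
  refine boxNorm_le_of_boxInner_le hs hℓ₀ hℓ
    (add_nonneg (boxNorm_nonneg hs hℓ F) (boxNorm_nonneg hs hℓ G)) ?_
  calc boxInner V s ℓ (fun _ x => F x + G x)
      = ∑ T : Finset (Fin s → Fin ℓ), boxInner V s ℓ (fun ω => if ω ∈ T then F else G) :=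
        boxInner_add _ _
    _ ≤ ∑ T : Finset (Fin s → Fin ℓ),
          ∏ ω, if ω ∈ T then boxNorm V s ℓ F else boxNorm V s ℓ G :=
        sum_le_sum fun T _ => (le_abs_self _).trans <|
          (abs_boxInner_le_prod_boxNorm hs hℓ₀ hℓ _).trans_eq <|
            prod_congr rfl fun ω _ => apply_ite _ _ _ _
    _ = (boxNorm V s ℓ F + boxNorm V s ℓ G) ^ ℓ ^ s := by
        rw [← Fintype.prod_add_eq_sum_prod_ite, prod_const, card_univ, Fintype.card_fun,
          Fintype.card_fin, Fintype.card_fin]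

theorem boxNorm_eq_zero_iff (hs : 2 ≤ s) (hℓ₂ : 2 ≤ ℓ) (hℓ : Even ℓ) {F : (Fin s → V) → ℝ} :
    boxNorm V s ℓ F = 0 ↔ F = 0 := by
  have : Nontrivial (Fin s) := Fin.nontrivial_iff_two_le.2 hs
  have : Nontrivial (Fin ℓ) := Fin.nontrivial_iff_two_le.2 hℓ₂
  refine ⟨fun h => funext fun y₀ => ?_, ?_⟩
  · classical
    obtain ⟨ω₀⟩ : Nonempty (Fin s → Fin ℓ) := inferInstance
    -- Since `s, ℓ ≥ 2`, every entry `x i j` is read by some `ω ≠ ω₀`, so the point indicators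
    -- pin `x` down to the constant rows `X₀`.
    let f := Function.update (fun _ y => if y = y₀ then 1 else 0) ω₀ F
    let X₀ : Fin s → Fin ℓ → V := fun i _ => y₀ i
    have hprod : ∀ x, ∏ ω, f ω (fun i => x i (ω i)) = if x = X₀ then F y₀ else 0 := by
      intro x
      split_ifs with hx
      · subst hx
        rw [prod_eq_single ω₀ (fun ω _ hω => by simp [f, X₀, hω]) (by simp)]
        simp [f, X₀]
      · obtain ⟨i, j, hij⟩ : ∃ i j, x i j ≠ y₀ i := by
          by_contra! hc
          exact hx (funext fun i => funext fun j => hc i j)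
        obtain ⟨ω, hω, hωi⟩ := Function.exists_ne_apply_eq ω₀ i j
        refine prod_eq_zero (mem_univ ω) ?_
        simp only [f, Function.update_of_ne hω, ite_eq_right_iff, one_ne_zero, imp_false]
        exact fun h => hij (hωi ▸ congrFun h i)
    have hzero : boxInner V s ℓ f = 0 := by
      refine abs_nonpos_iff.1 ((abs_boxInner_le_prod_boxNorm (by omega) (by omega) hℓ f).trans ?_)
      exact (prod_eq_zero (mem_univ ω₀) (by simpa [f] using h)).le
    have : Nonempty V := ⟨y₀ ⟨0, by omega⟩⟩
    simpa [boxInner, hprod, Fintype.expect_ite_eq'] using hzero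
  · rintro rfl
    rw [boxNorm_eq_boxInner]
    simp [boxInner, show ℓ ≠ 0 by omega]

theorem boxNorm_one [Nonempty V] : boxNorm V s ℓ (fun _ => 1) = 1 := by
  simp [boxNorm_eq_boxInner, boxInner]

theorem boxNorm_le_boxNorm_add [Nonempty V] (hs : s ≠ 0) (hℓ₀ : ℓ ≠ 0) (hℓ : Even ℓ) {d : ℕ}
    (hℓd : Even (ℓ + d)) (F : (Fin s → V) → ℝ) :
    boxNorm V s ℓ F ≤ boxNorm V s (ℓ + d) F := by
  let S : Finset (Fin s → Fin (ℓ + d)) :=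
    univ.map ((Fin.castAddEmb d).arrowCongrRight (γ := Fin s))
  let f : (Fin s → Fin (ℓ + d)) → (Fin s → V) → ℝ := fun ω => if ω ∈ S then F else fun _ => 1
  have hinner : boxInner V s (ℓ + d) f = boxInner V s ℓ (fun _ => F) := by
    simp only [boxInner, f, ite_apply, prod_ite_mem_eq, S, prod_map]
    exact Fin.expect_comp_castAdd s ℓ d fun y => ∏ ω : Fin s → Fin ℓ, F fun i => y i (ω i)
  have hnorm : ∏ ω, boxNorm V s (ℓ + d) (f ω) = boxNorm V s (ℓ + d) F ^ ℓ ^ s := by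
    simp only [f, apply_ite (boxNorm V s (ℓ + d)), boxNorm_one, prod_ite_mem_eq, prod_const,
      S, card_map, card_univ, Fintype.card_fun, Fintype.card_fin]
  refine boxNorm_le_of_boxInner_le hs hℓ₀ hℓ (boxNorm_nonneg hs hℓd F) ?_
  rw [← hinner, ← hnorm]
  exact (le_abs_self _).trans (abs_boxInner_le_prod_boxNorm hs (by omega) hℓd f)

end BoxNorm

theorem stmt16 (V : Type) [Fintype V] [Nonempty V] (s : ℕ) (hs : 2 ≤ s) :
    (∀ ℓ : ℕ, 2 ≤ ℓ → Even ℓ →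
      (∀ F : (Fin s → V) → ℝ, 0 ≤ boxNorm V s ℓ F) ∧
      (∀ F : (Fin s → V) → ℝ, boxNorm V s ℓ F = 0 ↔ F = fun _ => 0) ∧
      (∀ (c : ℝ) (F : (Fin s → V) → ℝ),
        boxNorm V s ℓ (fun x => c * F x) = |c| * boxNorm V s ℓ F) ∧
      (∀ F G : (Fin s → V) → ℝ,
        boxNorm V s ℓ (fun x => F x + G x) ≤ boxNorm V s ℓ F + boxNorm V s ℓ G)) ∧
    (∀ ℓ₁ ℓ₂ : ℕ, 2 ≤ ℓ₁ → ℓ₁ ≤ ℓ₂ → Even ℓ₁ → Even ℓ₂ →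
      ∀ F : (Fin s → V) → ℝ, boxNorm V s ℓ₁ F ≤ boxNorm V s ℓ₂ F) := by
  have hs₀ : s ≠ 0 := by omega
  refine ⟨fun ℓ hℓ₂ hℓ => ⟨boxNorm_nonneg hs₀ hℓ, fun F => boxNorm_eq_zero_iff hs hℓ₂ hℓ,
    boxNorm_const_mul hs₀ (by omega) hℓ, boxNorm_add_le hs₀ (by omega) hℓ⟩, ?_⟩
  intro ℓ₁ ℓ₂ hℓ₁ hle he₁ he₂ F
  obtain ⟨d, rfl⟩ := Nat.exists_eq_add_of_le hle
  exact boxNorm_le_boxNorm_add hs₀ (by omega) he₁ he₂ F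
end

section
/- Let Z be a finite additive group, let s ≥ 2 be an integer and let f : Z → ℝ. Then ‖f‖_{w^s(Z)} ≤ ‖f‖_{U^s(Z)}. If moreover |f(x)| ≤ 1 for all x ∈ Z, then ‖f‖_{U^s(Z)} ≤ (‖f‖_{w^s(Z)})^{1/2^s}. -/
open Finset

/-- The Gowers uniformity norm `‖f‖_{U^s(Z)}` of `f : Z → ℝ`. -/
noncomputable def gowersNorm (Z : Type*) [AddCommGroup Z] [Fintype Z] (s : ℕ) (f : Z → ℝ) : ℝ :=
  (avg (Z × (Fin s → Z)) fun xh =>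
      ∏ ω : Fin s → Bool, f (xh.1 + ∑ i, if ω i then xh.2 i else 0)) ^ (((2 : ℝ) ^ s)⁻¹)

/-- The weak uniformity norm `‖f‖_{w^s(Z)}` of `f : Z → ℝ`. -/
noncomputable def weakNorm (Z : Type*) [AddCommGroup Z] [Fintype Z] (s : ℕ) (f : Z → ℝ) : ℝ :=
  sSup {r : ℝ | ∃ h : (Fin s → Bool) → Z → ℝ,
    (∀ ω x, h ω x ∈ Set.Icc (-1 : ℝ) 1) ∧
    r = avg (Z × (Fin s → Z)) fun xh =>
      f xh.1 * ∏ ω ∈ Finset.univ.filter (fun ω : Fin s → Bool => ω ≠ fun _ => false),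
        h ω (xh.1 + ∑ i, if ω i then xh.2 i else 0)}

/-! The heart of the matter is the Gowers–Cauchy–Schwarz inequality
`⟨(g_ω)⟩ ≤ ∏_ω ‖g_ω‖_{U^s}` for the Gowers inner product, proved by induction on `s`.
Cauchy–Schwarz in the first coordinate of `h` bounds `⟨g⟩²` by the inner products of the two
faces of `g`, each doubled along the first coordinate. A doubled family is the average over `k`
of the `s`-dimensional inner product of the functions `x ↦ G_ω(x) G_ω(x + k)`, so the induction
hypothesis and Hölder's inequality bound it by `∏_ω ‖G_ω‖²_{U^{s+1}}`.

For `‖f‖_{w^s} ≤ ‖f‖_{U^s}`, put `f` at the corner `0` and note that `1`-bounded functions have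
`U^s` norm at most `1`; for the converse, take every `h_ω = f`. -/

open scoped BigOperators

lemma prod_cube_succ {M : Type*} [CommMonoid M] {s : ℕ} (F : (Fin (s + 1) → Bool) → M) :
    ∏ ω, F ω = (∏ ω, F (Fin.cons false ω)) * ∏ ω, F (Fin.cons true ω) := by
  rw [← Fintype.prod_equiv (Fin.consEquiv fun _ => Bool) (fun p => F (Fin.cons p.1 p.2)) F
    fun _ => rfl, Fintype.prod_prod_type, Fintype.prod_bool, mul_comm]

lemma expect_pi_fin_succ {α : Type*} [Fintype α] {s : ℕ} (F : (Fin (s + 1) → α) → ℝ) :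
    𝔼 h, F h = 𝔼 k, 𝔼 h, F (Fin.cons k h) := by
  rw [← Fintype.expect_equiv (Fin.consEquiv fun _ => α) (fun p => F (Fin.cons p.1 p.2)) F
    fun _ => rfl, ← univ_product_univ, expect_product]

lemma avg_eq_expect {α : Type*} [Fintype α] (f : α → ℝ) : avg α f = 𝔼 a, f a :=
  (Fintype.expect_eq_sum_div_card f).symm

lemma expect_mul_shift {G : Type*} [AddCommGroup G] [Fintype G] (F H : G → ℝ) :
    𝔼 k, 𝔼 x, F x * H (x + k) = (𝔼 x, F x) * 𝔼 x, H x := by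
  rw [expect_comm, expect_mul]
  refine expect_congr rfl fun x _ => ?_
  rw [← mul_expect, Fintype.expect_equiv (Equiv.addLeft x) (fun k => H (x + k)) H fun _ => rfl]

lemma expect_prod_pow_le {ι : Type*} [Fintype ι] {s : ℕ} (c : (Fin s → Bool) → ι → ℝ) :
    (𝔼 i, ∏ ω, c ω i) ^ 2 ^ s ≤ ∏ ω, 𝔼 i, c ω i ^ 2 ^ s := by
  induction s with
  | zero => simp
  | succ s ih =>
    calc (𝔼 i, ∏ ω, c ω i) ^ 2 ^ (s + 1)
        = ((𝔼 i, (∏ ω, c (Fin.cons false ω) i) * ∏ ω, c (Fin.cons true ω) i) ^ 2) ^ 2 ^ s := by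
          simp only [prod_cube_succ fun ω => c ω _, ← pow_mul, ← pow_succ']
      _ ≤ ((𝔼 i, (∏ ω, c (Fin.cons false ω) i) ^ 2) *
            𝔼 i, (∏ ω, c (Fin.cons true ω) i) ^ 2) ^ 2 ^ s := by
          gcongr
          exact expect_mul_sq_le_sq_mul_sq _ _ _
      _ ≤ (∏ ω, 𝔼 i, (c (Fin.cons false ω) i ^ 2) ^ 2 ^ s) *
            ∏ ω, 𝔼 i, (c (Fin.cons true ω) i ^ 2) ^ 2 ^ s := by
          simp only [mul_pow, ← prod_pow]
          exact mul_le_mul (ih _) (ih _) (by positivity)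
            (prod_nonneg fun _ _ => expect_nonneg fun _ _ => by positivity)
      _ = ∏ ω, 𝔼 i, c ω i ^ 2 ^ (s + 1) := by
          simp only [prod_cube_succ fun ω => 𝔼 i, c ω i ^ 2 ^ (s + 1), ← pow_mul, ← pow_succ']

section GowersInner

variable {Z : Type*} [AddCommGroup Z] {s : ℕ}

def cubeDot (ω : Fin s → Bool) (h : Fin s → Z) : Z :=
  ∑ i, if ω i then h i else 0

lemma cubeDot_cons (b : Bool) (ω : Fin s → Bool) (k : Z) (h : Fin s → Z) :
    cubeDot (Fin.cons b ω : Fin (s + 1) → Bool) (Fin.cons k h) =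
      (if b then k else 0) + cubeDot ω h := by
  simp [cubeDot, Fin.sum_univ_succ]

variable [Fintype Z]

noncomputable def cubeAvg (g : (Fin s → Bool) → Z → ℝ) (h : Fin s → Z) : ℝ :=
  𝔼 x, ∏ ω, g ω (x + cubeDot ω h)

noncomputable def gowersInner (g : (Fin s → Bool) → Z → ℝ) : ℝ :=
  𝔼 h, cubeAvg g h

def cubePair (g : (Fin (s + 1) → Bool) → Z → ℝ) (k : Z) : (Fin s → Bool) → Z → ℝ :=
  fun ω x => g (Fin.cons false ω) x * g (Fin.cons true ω) (x + k)

lemma cubeAvg_cons (g : (Fin (s + 1) → Bool) → Z → ℝ) (k : Z) (h : Fin s → Z) :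
    cubeAvg g (Fin.cons k h) = cubeAvg (cubePair g k) h := by
  refine expect_congr rfl fun x _ => ?_
  rw [prod_cube_succ, ← prod_mul_distrib]
  refine prod_congr rfl fun ω _ => ?_
  simp only [cubePair, cubeDot_cons, Bool.false_eq_true, ite_false, ite_true, zero_add,
    add_comm k, add_assoc]

lemma gowersInner_succ_eq_expect_cubePair (g : (Fin (s + 1) → Bool) → Z → ℝ) :
    gowersInner g = 𝔼 k, gowersInner (cubePair g k) := by
  simp only [gowersInner, expect_pi_fin_succ (cubeAvg g), cubeAvg_cons]

lemma gowersInner_succ (g : (Fin (s + 1) → Bool) → Z → ℝ) :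
    gowersInner g = 𝔼 h, cubeAvg (fun ω => g (Fin.cons false ω)) h *
      cubeAvg (fun ω => g (Fin.cons true ω)) h := by
  rw [gowersInner_succ_eq_expect_cubePair]
  simp only [gowersInner]
  rw [expect_comm]
  refine expect_congr rfl fun h _ => ?_
  rw [cubeAvg, cubeAvg, ← expect_mul_shift]
  refine expect_congr rfl fun k _ => expect_congr rfl fun x _ => ?_
  simp only [cubePair, prod_mul_distrib, add_right_comm x k]

lemma gowersInner_tail (G : (Fin s → Bool) → Z → ℝ) :
    gowersInner (fun ω : Fin (s + 1) → Bool => G (Fin.tail ω)) = 𝔼 h, cubeAvg G h ^ 2 := by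
  simp only [gowersInner_succ, Fin.tail_cons, sq]

lemma gowersInner_tail_nonneg (G : (Fin s → Bool) → Z → ℝ) :
    0 ≤ gowersInner (fun ω : Fin (s + 1) → Bool => G (Fin.tail ω)) := by
  rw [gowersInner_tail]
  exact expect_nonneg fun _ _ => sq_nonneg _

lemma gowersInner_const_nonneg (f : Z → ℝ) :
    0 ≤ gowersInner (fun _ : Fin (s + 1) → Bool => f) :=
  gowersInner_tail_nonneg fun _ => f

lemma sq_gowersInner_succ_le (g : (Fin (s + 1) → Bool) → Z → ℝ) :
    gowersInner g ^ 2 ≤ gowersInner (fun ω => g (Fin.cons false (Fin.tail ω))) *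
      gowersInner (fun ω => g (Fin.cons true (Fin.tail ω))) := by
  rw [gowersInner_succ, gowersInner_tail fun ω => g (Fin.cons false ω),
    gowersInner_tail fun ω => g (Fin.cons true ω)]
  exact expect_mul_sq_le_sq_mul_sq _ _ _

end GowersInner

section GowersNorm

variable {Z : Type*} [AddCommGroup Z] [Fintype Z]

lemma gowersNorm_eq (s : ℕ) (f : Z → ℝ) :
    gowersNorm Z s f = gowersInner (fun _ : Fin s → Bool => f) ^ ((2 : ℝ) ^ s)⁻¹ := by
  rw [gowersNorm, avg_eq_expect, ← univ_product_univ, expect_product, expect_comm]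
  rfl

lemma gowersNorm_nonneg {s : ℕ} (f : Z → ℝ) : 0 ≤ gowersNorm Z (s + 1) f := by
  rw [gowersNorm_eq]
  exact Real.rpow_nonneg (gowersInner_const_nonneg f) _

lemma gowersNorm_pow (s : ℕ) (f : Z → ℝ) :
    gowersNorm Z s f ^ 2 ^ s = gowersInner (fun _ : Fin s → Bool => f) := by
  rw [gowersNorm_eq]
  cases s with
  | zero => simp
  | succ s =>
    have h := Real.rpow_inv_natCast_pow (gowersInner_const_nonneg (s := s) f)
      (pow_ne_zero (s + 1) two_ne_zero)
    exact_mod_cast h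

lemma gowersNorm_le_one {s : ℕ} {f : Z → ℝ} (hf : ∀ x, |f x| ≤ 1) :
    gowersNorm Z (s + 1) f ≤ 1 := by
  rw [gowersNorm_eq]
  refine Real.rpow_le_one (gowersInner_const_nonneg f) ?_ (by positivity)
  refine expect_le univ_nonempty fun h _ => expect_le univ_nonempty fun x _ => ?_
  calc ∏ ω, f (x + cubeDot ω h) ≤ |∏ ω, f (x + cubeDot ω h)| := le_abs_self _
    _ = ∏ ω, |f (x + cubeDot ω h)| := abs_prod _ _
    _ ≤ 1 := prod_le_one (fun _ _ => abs_nonneg _) fun _ _ => hf _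

lemma gowersInner_tail_le {s : ℕ}
    (ih : ∀ g : (Fin s → Bool) → Z → ℝ, gowersInner g ≤ ∏ ω, gowersNorm Z s (g ω))
    (G : (Fin s → Bool) → Z → ℝ) :
    gowersInner (fun ω : Fin (s + 1) → Bool => G (Fin.tail ω)) ≤
      ∏ ω, gowersNorm Z (s + 1) (G ω) ^ 2 := by
  set c : (Fin s → Bool) → Z → ℝ := fun ω k => gowersNorm Z s fun x => G ω x * G ω (x + k)
  have hc : ∀ ω, 𝔼 k, c ω k ^ 2 ^ s = (gowersNorm Z (s + 1) (G ω) ^ 2) ^ 2 ^ s := by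
    intro ω
    rw [← pow_mul, ← pow_succ', gowersNorm_pow, gowersInner_succ_eq_expect_cubePair]
    simp only [c, gowersNorm_pow]
    rfl
  have hle : gowersInner (fun ω : Fin (s + 1) → Bool => G (Fin.tail ω)) ≤ 𝔼 k, ∏ ω, c ω k := by
    rw [gowersInner_succ_eq_expect_cubePair]
    exact expect_le_expect fun k _ => ih _
  have h0 := gowersInner_tail_nonneg G
  refine (pow_le_pow_iff_left₀ h0 (prod_nonneg fun _ _ => sq_nonneg _)
    (pow_ne_zero s two_ne_zero)).1 ?_
  calc gowersInner (fun ω : Fin (s + 1) → Bool => G (Fin.tail ω)) ^ 2 ^ s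
      ≤ (𝔼 k, ∏ ω, c ω k) ^ 2 ^ s := pow_le_pow_left₀ h0 hle _
    _ ≤ ∏ ω, 𝔼 k, c ω k ^ 2 ^ s := expect_prod_pow_le c
    _ = (∏ ω, gowersNorm Z (s + 1) (G ω) ^ 2) ^ 2 ^ s := by simp only [hc, prod_pow]

theorem gowersInner_le_prod_gowersNorm {s : ℕ} (g : (Fin s → Bool) → Z → ℝ) :
    gowersInner g ≤ ∏ ω, gowersNorm Z s (g ω) := by
  induction s with
  | zero =>
    rw [Fintype.prod_unique, gowersNorm_eq, pow_zero, inv_one, Real.rpow_one]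
    exact (congrArg gowersInner (funext fun ω => congrArg g (Subsingleton.elim _ _))).le
  | succ s ih =>
    have htail := gowersInner_tail_le ih
    have hsq : gowersInner g ^ 2 ≤ (∏ ω, gowersNorm Z (s + 1) (g ω)) ^ 2 := by
      calc gowersInner g ^ 2
          ≤ gowersInner (fun ω => g (Fin.cons false (Fin.tail ω))) *
              gowersInner (fun ω => g (Fin.cons true (Fin.tail ω))) := sq_gowersInner_succ_le g
        _ ≤ (∏ ω, gowersNorm Z (s + 1) (g (Fin.cons false ω)) ^ 2) *
              ∏ ω, gowersNorm Z (s + 1) (g (Fin.cons true ω)) ^ 2 :=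
            mul_le_mul (htail fun ω => g (Fin.cons false ω)) (htail fun ω => g (Fin.cons true ω))
              (gowersInner_tail_nonneg fun ω => g (Fin.cons true ω))
              (prod_nonneg fun _ _ => sq_nonneg _)
        _ = (∏ ω, gowersNorm Z (s + 1) (g ω)) ^ 2 := by
            rw [prod_cube_succ, mul_pow, prod_pow, prod_pow]
    exact (le_abs_self _).trans
      (abs_le_of_sq_le_sq hsq (prod_nonneg fun _ _ => gowersNorm_nonneg _))

end GowersNorm

section WeakNorm

variable {Z : Type*} [AddCommGroup Z] [Fintype Z]

def weakValues (s : ℕ) (f : Z → ℝ) : Set ℝ :=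
  {r | ∃ h : (Fin s → Bool) → Z → ℝ, (∀ ω x, |h ω x| ≤ 1) ∧
    r = gowersInner (Function.update h (fun _ => false) f)}

lemma avg_mul_prod_eq_gowersInner_update {s : ℕ} (f : Z → ℝ) (h : (Fin s → Bool) → Z → ℝ) :
    (avg (Z × (Fin s → Z)) fun xh =>
      f xh.1 * ∏ ω ∈ univ.filter (fun ω : Fin s → Bool => ω ≠ fun _ => false),
        h ω (xh.1 + ∑ i, if ω i then xh.2 i else 0)) =
      gowersInner (Function.update h (fun _ => false) f) := by
  rw [avg_eq_expect, ← univ_product_univ, expect_product, expect_comm]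
  refine expect_congr rfl fun y _ => expect_congr rfl fun x _ => ?_
  rw [← mul_prod_erase univ _ (mem_univ fun _ => false), Function.update_self, filter_ne']
  congr 1
  · simp [cubeDot]
  · exact prod_congr rfl fun ω hω => by rw [Function.update_of_ne (ne_of_mem_erase hω)]; rfl

lemma weakNorm_eq_sSup_weakValues (s : ℕ) (f : Z → ℝ) :
    weakNorm Z s f = sSup (weakValues s f) := by
  simp only [weakNorm, weakValues, avg_mul_prod_eq_gowersInner_update, Set.mem_Icc, ← abs_le]

lemma le_gowersNorm_of_mem_weakValues {s : ℕ} {f : Z → ℝ} {r : ℝ}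
    (hr : r ∈ weakValues (s + 1) f) : r ≤ gowersNorm Z (s + 1) f := by
  obtain ⟨h, hh, rfl⟩ := hr
  calc gowersInner (Function.update h (fun _ => false) f)
      ≤ ∏ ω, gowersNorm Z (s + 1) (Function.update h (fun _ => false) f ω) :=
        gowersInner_le_prod_gowersNorm _
    _ = gowersNorm Z (s + 1) f * ∏ ω ∈ univ.erase fun _ => false, gowersNorm Z (s + 1) (h ω) := by
        rw [← mul_prod_erase univ _ (mem_univ fun _ => false), Function.update_self]
        exact congrArg _ (prod_congr rfl fun ω hω => by
          rw [Function.update_of_ne (ne_of_mem_erase hω)])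
    _ ≤ gowersNorm Z (s + 1) f :=
        mul_le_of_le_one_right (gowersNorm_nonneg f)
          (prod_le_one (fun _ _ => gowersNorm_nonneg _) fun ω _ => gowersNorm_le_one (hh ω))

end WeakNorm

theorem stmt18 (Z : Type) [AddCommGroup Z] [Fintype Z] (s : ℕ) (hs : 2 ≤ s) (f : Z → ℝ) :
    weakNorm Z s f ≤ gowersNorm Z s f ∧
    ((∀ x, |f x| ≤ 1) → gowersNorm Z s f ≤ (weakNorm Z s f) ^ (((2 : ℝ) ^ s)⁻¹)) := by
  obtain ⟨t, rfl⟩ : ∃ t, s = t + 1 := ⟨s - 1, by omega⟩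
  have hbound : ∀ r ∈ weakValues (t + 1) f, r ≤ gowersNorm Z (t + 1) f :=
    fun _ => le_gowersNorm_of_mem_weakValues
  rw [weakNorm_eq_sSup_weakValues]
  refine ⟨Real.sSup_le hbound (gowersNorm_nonneg f), fun hf => ?_⟩
  have hmem : gowersInner (fun _ => f) ∈ weakValues (t + 1) f :=
    ⟨fun _ => f, fun _ => hf, by rw [Function.update_eq_self]⟩
  rw [gowersNorm_eq]
  exact Real.rpow_le_rpow (gowersInner_const_nonneg f) (le_csSup ⟨_, hbound⟩ hmem) (by positivity)
end
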